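/- Any group homomorphism ρ from a group G to U_{n+1}(F_p) is trivial on G_{(n+1)}, the (n+1)-st term of the p-Zassenhaus filtration of G. -/

import Mathlib

/-- The subgroup generated by `p`-th powers of elements of `H`. -/
def Subgroup.pPow {G : Type*} [Group G] (H : Subgroup G) (p : ℕ) : Subgroup G :=
  Subgroup.closure {x : G | ∃ h ∈ H, x = h ^ p}

/-- The `p`-Zassenhaus filtration of a group `G`: `zassenhaus p hp G m` is `G_{(m)}`
(with the convention that the value at `0` is `⊤`). -/
def zassenhaus (p : ℕ) (hp : 2 ≤ p) (G : Type*) [Group G] : ℕ → Subgroup G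
  | 0 => ⊤
  | 1 => ⊤
  | (m + 2) =>
      (zassenhaus p hp G ((m + 1) / p + 1)).pPow p ⊔
        ⨆ i : Fin (m + 1),
          ⁅zassenhaus p hp G ((i : ℕ) + 1), zassenhaus p hp G (m + 1 - (i : ℕ))⁆
  decreasing_by
  · exact Nat.succ_lt_succ (Nat.div_lt_self (by omega) (by omega))
  · have := i.isLt; omega
  · have := i.isLt; omega


namespace ZassPaper

abbrev Mat (p n : ℕ) := Matrix (Fin (n + 1)) (Fin (n + 1)) (ZMod p)

/-- `memV p n d a` : the strictly upper triangular matrix `a` has all entries vanishing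
at superdiagonal distance `< d`, i.e. `a i j = 0` whenever `j - i ≤ d - 1`. -/
def memV (p n d : ℕ) (a : Mat p n) : Prop :=
  ∀ i j : Fin (n + 1), (j : ℕ) < (i : ℕ) + d → a i j = 0

lemma memV_mono (p n : ℕ) {d e : ℕ} (h : e ≤ d) {a : Mat p n} (ha : memV p n d a) :
    memV p n e a := fun i j hij => ha i j (by omega)

lemma memV_zero (p n d : ℕ) : memV p n d 0 := fun _ _ _ => rfl

lemma memV_add (p n : ℕ) {d : ℕ} {a b : Mat p n} (ha : memV p n d a) (hb : memV p n d b) :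
    memV p n d (a + b) := by
  intro i j h
  simp [Matrix.add_apply, ha i j h, hb i j h]

lemma memV_mul (p n : ℕ) {d e : ℕ} {a b : Mat p n} (ha : memV p n d a) (hb : memV p n e b) :
    memV p n (d + e) (a * b) := by
  intro i j h
  rw [Matrix.mul_apply]
  apply Finset.sum_eq_zero
  intro k _
  by_cases hk : (k : ℕ) < (i : ℕ) + d
  · rw [ha i k hk, zero_mul]
  · rw [hb k j (by omega), mul_zero]

variable (p n : ℕ) [Fact p.Prime]

def UTset : Set (GL (Fin (n + 1)) (ZMod p)) :=
  {A | ∃ a : Mat p n, memV p n 1 a ∧ (A : Mat p n) = 1 + a}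

lemma UTset_one : (1 : GL (Fin (n + 1)) (ZMod p)) ∈ UTset p n :=
  ⟨0, memV_zero p n 1, by simp⟩

lemma UTset_mul {A B : GL (Fin (n + 1)) (ZMod p)} (hA : A ∈ UTset p n) (hB : B ∈ UTset p n) :
    A * B ∈ UTset p n := by
  obtain ⟨a, ha, hA⟩ := hA
  obtain ⟨b, hb, hB⟩ := hB
  refine ⟨a + b + a * b, ?_, ?_⟩
  · exact memV_add p n (memV_add p n ha hb)
      (memV_mono p n (by omega) (memV_mul p n ha hb))
  · show ((A * B : GL (Fin (n + 1)) (ZMod p)) : Mat p n) = _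
    rw [Units.val_mul, hA, hB]
    noncomm_ring

lemma UTset_pow {A : GL (Fin (n + 1)) (ZMod p)} (hA : A ∈ UTset p n) (k : ℕ) :
    A ^ k ∈ UTset p n := by
  induction k with
  | zero => simpa using UTset_one p n
  | succ k ih => rw [pow_succ]; exact UTset_mul p n ih hA

lemma UTset_inv {A : GL (Fin (n + 1)) (ZMod p)} (hA : A ∈ UTset p n) :
    A⁻¹ ∈ UTset p n := by
  have h1 : A ^ Fintype.card (GL (Fin (n + 1)) (ZMod p)) = 1 := pow_card_eq_one
  have hc : 0 < Fintype.card (GL (Fin (n + 1)) (ZMod p)) := Fintype.card_pos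
  have : A⁻¹ = A ^ (Fintype.card (GL (Fin (n + 1)) (ZMod p)) - 1) := by
    have : A * A ^ (Fintype.card (GL (Fin (n + 1)) (ZMod p)) - 1) = 1 := by
      rw [← pow_succ', Nat.sub_add_cancel hc]
      exact h1
    exact ((inv_eq_of_mul_eq_one_right this).symm).symm
  rw [this]
  exact UTset_pow p n hA _

/-- The group of upper triangular unipotent `(n+1)×(n+1)` matrices over `F_p`,
as a subgroup of `GL (Fin (n+1)) (ZMod p)`. -/
def UT : Subgroup (GL (Fin (n + 1)) (ZMod p)) where
  carrier := UTset p n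
  one_mem' := UTset_one p n
  mul_mem' := UTset_mul p n
  inv_mem' := UTset_inv p n

end ZassPaper

/-!
The entries of `A - 1` for `A ∈ U_{n+1}(F_p)` vanish at superdiagonal distance `< 1`; more
generally let `U^{(m)}` consist of the `A` with `A - 1` vanishing at distance `< m`. Since the
product of matrices vanishing at distance `< i` and `< j` vanishes at distance `< i + j`, the
identities `[A, B] - 1 = (AB - BA) A⁻¹ B⁻¹` and `A ^ p - 1 = (A - 1) ^ p` (Frobenius, `F_p` has
characteristic `p`) show that `(U^{(m)})_m` is an `N_p`-series in Lazard's sense: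
`[U^{(i)}, U^{(j)}] ⊆ U^{(i+j)}` and `(U^{(d)})^p ⊆ U^{(pd)}`. The Zassenhaus filtration is the
fastest descending `N_p`-series starting at `G`, so `ρ(G_{(m)}) ⊆ U^{(m)}`, and `U^{(n+1)} = 1`.
-/

open scoped commutatorElement

def Submonoid.toSubgroupOfFinite {G : Type*} [Group G] [Finite G] (S : Submonoid G) :
    Subgroup G :=
  { S with
    inv_mem' := fun {g} hg => by
      obtain ⟨k, hk⟩ :=
        mem_powers_iff_mem_zpowers.2 (Subgroup.inv_mem _ (Subgroup.mem_zpowers g))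
      exact hk ▸ S.pow_mem hg k }

theorem Units.val_commutatorElement_sub_one {R : Type*} [Ring R] (a b : Rˣ) :
    ((⁅a, b⁆ : Rˣ) : R) - 1 = (a * b - b * a) * ↑a⁻¹ * ↑b⁻¹ := by
  rw [commutatorElement_def, sub_mul, sub_mul, mul_assoc (b : R), Units.mul_inv, mul_one,
    Units.mul_inv]
  simp only [Units.val_mul]

structure IsNpSeries (p : ℕ) {G : Type*} [Group G] (V : ℕ → Subgroup G) : Prop where
  antitone : Antitone V
  pow_mem {d : ℕ} {g : G} : g ∈ V d → g ^ p ∈ V (p * d)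
  commutatorElement_mem {i j : ℕ} {g h : G} : g ∈ V i → h ∈ V j → ⁅g, h⁆ ∈ V (i + j)

namespace IsNpSeries

variable {p : ℕ} {G H : Type*} [Group G] [Group H]

theorem comap {V : ℕ → Subgroup H} (hV : IsNpSeries p V) (f : G →* H) :
    IsNpSeries p fun m => (V m).comap f where
  antitone _ _ hde := Subgroup.comap_mono (hV.antitone hde)
  pow_mem hg := by
    rw [Subgroup.mem_comap, map_pow]
    exact hV.pow_mem hg
  commutatorElement_mem hg hh := by
    rw [Subgroup.mem_comap, map_commutatorElement]
    exact hV.commutatorElement_mem hg hh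

theorem zassenhaus_le {V : ℕ → Subgroup G} (hV : IsNpSeries p V) (hp : 2 ≤ p) (hV1 : V 1 = ⊤)
    (m : ℕ) : zassenhaus p hp G m ≤ V m := by
  induction m using zassenhaus.induct p hp with
  | case1 => simpa [zassenhaus, hV1] using hV.antitone (Nat.zero_le 1)
  | case2 => simp [zassenhaus, hV1]
  | case3 m ih_pow ih_left ih_right =>
    rw [zassenhaus.eq_3]
    refine sup_le ?_ (iSup_le fun i => ?_)
    · have hm : m + 2 ≤ p * ((m + 1) / p + 1) := Nat.lt_mul_div_succ (m + 1) (by omega)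
      rw [Subgroup.pPow, Subgroup.closure_le]
      rintro _ ⟨g, hg, rfl⟩
      exact hV.antitone hm (hV.pow_mem (ih_pow hg))
    · have hi : (i : ℕ) + 1 + (m + 1 - i) = m + 2 := by omega
      rw [Subgroup.commutator_le]
      intro g hg h hh
      simpa only [hi] using hV.commutatorElement_mem (ih_left i hg) (ih_right i hh)

end IsNpSeries

namespace ZassPaper

variable {p n : ℕ}

lemma memV_one : memV p n 0 (1 : Mat p n) := fun i j hij =>
  Matrix.one_apply_ne (by rintro rfl; omega)

lemma memV_sub {d : ℕ} {a b : Mat p n} (ha : memV p n d a) (hb : memV p n d b) :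
    memV p n d (a - b) := fun i j hij => by
  simp [Matrix.sub_apply, ha i j hij, hb i j hij]

lemma memV_pow {d : ℕ} {a : Mat p n} (ha : memV p n d a) (k : ℕ) :
    memV p n (k * d) (a ^ k) := by
  induction k with
  | zero => simpa using memV_one
  | succ k ih => simpa [pow_succ, Nat.succ_mul] using memV_mul p n ih ha

lemma memV_zero_of_memV_sub_one {d : ℕ} {a : Mat p n} (ha : memV p n d (a - 1)) : memV p n 0 a := by
  simpa using memV_add p n (memV_mono p n (Nat.zero_le d) ha) memV_one

lemma memV_mul_sub_one {d : ℕ} {a b : Mat p n} (ha : memV p n d (a - 1))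
    (hb : memV p n d (b - 1)) : memV p n d (a * b - 1) := by
  have h : a * b - 1 = (a - 1) + (b - 1) + (a - 1) * (b - 1) := by noncomm_ring
  rw [h]
  exact memV_add p n (memV_add p n ha hb) (memV_mono p n (by omega) (memV_mul p n ha hb))

lemma eq_zero_of_memV_succ {a : Mat p n} (ha : memV p n (n + 1) a) : a = 0 := by
  ext i j
  exact ha i j (by omega)

variable (p n) in
def UTfiltrationSubmonoid (m : ℕ) : Submonoid (GL (Fin (n + 1)) (ZMod p)) where
  carrier := {A | memV p n m ((A : Mat p n) - 1)}
  one_mem' := by simpa using memV_zero p n m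
  mul_mem' := memV_mul_sub_one

variable [NeZero p]

variable (p n) in
def UTfiltration (m : ℕ) : Subgroup (GL (Fin (n + 1)) (ZMod p)) :=
  (UTfiltrationSubmonoid p n m).toSubgroupOfFinite

lemma mem_UTfiltration {m : ℕ} {A : GL (Fin (n + 1)) (ZMod p)} :
    A ∈ UTfiltration p n m ↔ memV p n m ((A : Mat p n) - 1) := Iff.rfl

lemma UTfiltration_antitone : Antitone (UTfiltration p n) :=
  fun _ _ hde _ hA => memV_mono p n hde hA

lemma pow_mem_UTfiltration [Fact p.Prime] {d : ℕ} {A : GL (Fin (n + 1)) (ZMod p)}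
    (hA : A ∈ UTfiltration p n d) : A ^ p ∈ UTfiltration p n (p * d) := by
  have hfrob : ((A : Mat p n) - 1) ^ p = (A : Mat p n) ^ p - 1 := by
    rw [sub_pow_char_of_commute p (Commute.one_right _), one_pow]
  rw [mem_UTfiltration, Units.val_pow_eq_pow_val, ← hfrob]
  exact memV_pow hA p

lemma commutatorElement_mem_UTfiltration {i j : ℕ} {A B : GL (Fin (n + 1)) (ZMod p)}
    (hA : A ∈ UTfiltration p n i) (hB : B ∈ UTfiltration p n j) :
    ⁅A, B⁆ ∈ UTfiltration p n (i + j) := by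
  have hAB : (A : Mat p n) * B - B * A = (A - 1) * (B - 1) - (B - 1) * (A - 1) := by noncomm_ring
  have hcomm : memV p n (i + j) ((A : Mat p n) * B - B * A) := by
    rw [hAB]
    exact memV_sub (memV_mul p n hA hB) (add_comm j i ▸ memV_mul p n hB hA)
  have hAinv := memV_zero_of_memV_sub_one ((UTfiltration p n i).inv_mem hA)
  have hBinv := memV_zero_of_memV_sub_one ((UTfiltration p n j).inv_mem hB)
  rw [mem_UTfiltration, Units.val_commutatorElement_sub_one]
  exact memV_mul p n (e := 0) (memV_mul p n (e := 0) hcomm hAinv) hBinv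

theorem isNpSeries_UTfiltration [Fact p.Prime] : IsNpSeries p (UTfiltration p n) where
  antitone := UTfiltration_antitone
  pow_mem := pow_mem_UTfiltration
  commutatorElement_mem := commutatorElement_mem_UTfiltration

lemma UT_le_UTfiltration_one [Fact p.Prime] : UT p n ≤ UTfiltration p n 1 := by
  rintro A ⟨a, ha, hA⟩
  rwa [mem_UTfiltration, hA, add_sub_cancel_left]

lemma UTfiltration_succ_eq_bot : UTfiltration p n (n + 1) = ⊥ :=
  (Subgroup.eq_bot_iff_forall _).2 fun _ hA => Units.ext (sub_eq_zero.1 (eq_zero_of_memV_succ hA))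

theorem stmt7_general (p n : ℕ) [Fact p.Prime] (G : Type*) [Group G]
    (ρ : G →* UT p n) :
    ∀ g ∈ zassenhaus p (Fact.out : p.Prime).two_le G (n + 1), ρ g = 1 := by
  intro g hg
  let f := (UT p n).subtype.comp ρ
  have hV1 : (UTfiltration p n 1).comap f = ⊤ :=
    eq_top_iff.2 fun g _ => UT_le_UTfiltration_one (ρ g).2
  have hfg := (isNpSeries_UTfiltration.comap f).zassenhaus_le _ hV1 (n + 1) hg
  rw [Subgroup.mem_comap, UTfiltration_succ_eq_bot, Subgroup.mem_bot] at hfg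
  exact Subtype.ext hfg

/-- Any homomorphism from a group `G` to `U_{n+1}(F_p)` is trivial on `G_{(n+1)}`. -/
theorem stmt7 (p n : ℕ) [Fact p.Prime] (hn : 1 ≤ n) (G : Type*) [Group G]
    (ρ : G →* UT p n) :
    ∀ g ∈ zassenhaus p (Fact.out : p.Prime).two_le G (n + 1), ρ g = 1 :=
  stmt7_general p n G ρ

end ZassPaper
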